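/- arXiv:2212.01771 — 4 statements merged into one kernel-verified Lean document; each statement's English description precedes it below -/
import Mathlib

section
/- Let 0 < ε < 1, let p ≥ 1 and 1 ≤ k ≤ |F| be integers, and let X ⊆ F with |X| = k. Suppose that for every subset X' ⊆ F with |X'| = k, |X \ X'| ≤ p and |X' \ X| ≤ p, it holds that ∑_{v ∈ D} d(v, X') > (1 − ε/k) · ∑_{v ∈ D} d(v, X). Then ∑_{v ∈ D} d(v, X) ≤ (1/(1−ε)) · (3 + 2/p) · OPT, where OPT = min_{Y ⊆ F, |Y| = k} ∑_{v ∈ D} d(v, Y). -/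
/-!
Arya et al.'s swap argument, in Gupta and Tangwongsan's form. Fix an optimal `Y`, let `π` send
every point to a nearest center of `X` and `o` every client to a nearest center of `Y`. Closing
`A ⊆ X` and opening `B ⊆ Y` is cheap when every `y ∈ Y` with `π y ∈ A` gets opened: clients of
an opened `y` move to `y`, and any other client `v` that loses its center moves to `π (o v)`,
paying at most `2 d(v, o v)` more. Local optimality says each such swap saves less than
`ε/k · cost X`. Group `Y` into the fibres of `π`. A fibre of `m ≤ p` points over `x` is swapped
against `x` together with `m - 1` centers of `X` that no point of `Y` uses; a larger fibre is
handled by its `m (m - 1)` one-for-one swaps, each of weight `1/(m - 1) ≤ 1/p`. Summing, each `y`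
is opened with total weight one and each `x` is closed with weight at most `1 + 1/p`, whence
`-ε · cost X ≤ (cost Y - cost X) + 2 (1 + 1/p) cost Y`.
-/

noncomputable def distToSet {M : Type*} [MetricSpace M] (v : M) (X : Finset M) : ℝ :=
  sInf ((fun u => dist v u) '' (X : Set M))

open Finset

namespace Finset

variable {α ι : Type*} [DecidableEq α] [DecidableEq ι]

theorem exists_pairwiseDisjoint_subset_card_eq (T : Finset ι) (c : ι → ℕ) {S : Finset α}
    (h : ∑ i ∈ T, c i ≤ S.card) :
    ∃ C : ι → Finset α, (∀ i ∈ T, C i ⊆ S ∧ (C i).card = c i) ∧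
      (T : Set ι).PairwiseDisjoint C := by
  induction T using Finset.induction_on generalizing S with
  | empty => exact ⟨fun _ => ∅, by simp, by simp⟩
  | @insert a T ha ih =>
    rw [sum_insert ha] at h
    obtain ⟨Ca, hCaS, hCa⟩ := exists_subset_card_eq (le_of_add_le_left h)
    obtain ⟨C, hC, hdisj⟩ := ih (S := S \ Ca) (by rw [card_sdiff_of_subset hCaS]; omega)
    have hCa_disj : ∀ i ∈ T, Disjoint Ca (C i) := fun i hi =>
      disjoint_of_subset_right (hC i hi).1 disjoint_sdiff
    refine ⟨Function.update C a Ca, fun i hi => ?_, ?_⟩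
    · rcases mem_insert.mp hi with rfl | hi
      · simpa using ⟨hCaS, hCa⟩
      · rw [Function.update_of_ne (ne_of_mem_of_not_mem hi ha)]
        exact ⟨(hC i hi).1.trans sdiff_subset, (hC i hi).2⟩
    · rw [coe_insert]
      refine Set.PairwiseDisjoint.insert ?_ fun i hi hne => ?_
      · refine hdisj.mono_on fun i hi => ?_
        rw [Function.update_of_ne (ne_of_mem_of_not_mem hi ha)]
      · rw [Function.update_self, Function.update_of_ne (ne_of_mem_of_not_mem hi ha)]
        exact hCa_disj i hi

theorem exists_card_eq_of_sdiff_union_subset {X A B : Finset α} (hA : A ⊆ X)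
    (hBA : B.card ≤ A.card) :
    ∃ X', X \ A ∪ B ⊆ X' ∧ X' ⊆ X ∪ B ∧ X'.card = X.card := by
  refine exists_subsuperset_card_eq (union_subset_union sdiff_subset le_rfl) ?_
    (card_le_card subset_union_left)
  calc (X \ A ∪ B).card ≤ (X \ A).card + B.card := card_union_le _ _
    _ ≤ X.card := by have := card_le_card hA; rw [card_sdiff_of_subset hA]; omega

end Finset

section Swaps

variable {α : Type*} [DecidableEq α]

/-- `A ⊆ X` is closed and `B ⊆ Y` opened; `φ` assigns each point of `Y` a center of `X`. -/
def IsAdmissibleSwap (X Y : Finset α) (φ : α → α) (p : ℕ) (A B : Finset α) : Prop :=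
  A ⊆ X ∧ B ⊆ Y ∧ B.card ≤ A.card ∧ A.card ≤ p ∧ ∀ y ∈ Y, φ y ∈ A → y ∈ B

theorem neg_mul_card_le_of_block {g l : α → ℝ} {t : ℝ} {p : ℕ} {x : α} {B C : Finset α}
    (hp : 1 ≤ p) (ht : 0 ≤ t) (hl : ∀ a ∈ insert x C, 0 ≤ l a)
    (hcard : B.card = C.card + 1)
    (hwhole : B.card ≤ p → -t ≤ ∑ b ∈ B, g b + ∑ a ∈ insert x C, l a)
    (hpair : ∀ a ∈ C, ∀ b ∈ B, -t ≤ g b + l a) :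
    -t * B.card ≤ ∑ b ∈ B, g b + (1 + 1 / p) * ∑ a ∈ insert x C, l a := by
  have hL : 0 ≤ ∑ a ∈ insert x C, l a := sum_nonneg hl
  rcases le_or_gt B.card p with hBp | hpB
  · have hB : (1 : ℝ) ≤ B.card := by exact_mod_cast hcard ▸ Nat.le_add_left 1 _
    have hpL : 0 ≤ 1 / (p : ℝ) * ∑ a ∈ insert x C, l a := by positivity
    calc -t * B.card ≤ -t := by nlinarith
      _ ≤ ∑ b ∈ B, g b + ∑ a ∈ insert x C, l a := hwhole hBp
      _ ≤ _ := by linarith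
  · have hc : (0 : ℝ) < #C := by exact_mod_cast (by omega : 0 < #C)
    have hcp : (#C + 1 : ℝ) ≤ #C * (1 + 1 / p) := by
      have : (p : ℝ) ≤ (#C : ℝ) := by exact_mod_cast (by omega : p ≤ #C)
      rw [mul_one_add, mul_one_div, add_le_add_iff_left, le_div_iff₀ (by positivity)]
      linarith
    -- averaging the `|C| * |B|` one-for-one swaps
    have havg : #C * (-t * (#C + 1)) ≤ #C * ∑ b ∈ B, g b + (#C + 1) * ∑ a ∈ C, l a := by
      have := sum_le_sum fun a ha => sum_le_sum fun b hb => hpair a ha b hb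
      simp only [sum_const, nsmul_eq_mul, sum_add_distrib, ← mul_sum, hcard] at this
      push_cast at this
      linarith
    rw [hcard, Nat.cast_add_one]
    refine le_of_mul_le_mul_left ?_ hc
    calc #C * (-t * (#C + 1)) ≤ #C * ∑ b ∈ B, g b + (#C + 1) * ∑ a ∈ C, l a := havg
      _ ≤ #C * ∑ b ∈ B, g b + #C * (1 + 1 / p) * ∑ a ∈ insert x C, l a := by
        gcongr
        · exact sum_nonneg fun a ha => hl a (mem_insert_of_mem ha)
        · exact fun a ha _ => hl a ha
        · exact subset_insert x C
      _ = #C * (∑ b ∈ B, g b + (1 + 1 / p) * ∑ a ∈ insert x C, l a) := by ring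

theorem neg_mul_card_le_of_isAdmissibleSwap {X Y : Finset α} {φ : α → α} {g l : α → ℝ}
    {t : ℝ} {p : ℕ} (hp : 1 ≤ p) (ht : 0 ≤ t) (hYX : Y.card ≤ X.card)
    (hφ : ∀ y ∈ Y, φ y ∈ X) (hl : ∀ x ∈ X, 0 ≤ l x)
    (hswap : ∀ A B, IsAdmissibleSwap X Y φ p A B →
      -t ≤ ∑ b ∈ B, g b + ∑ a ∈ A, l a) :
    -t * Y.card ≤ ∑ y ∈ Y, g y + (1 + 1 / p) * ∑ x ∈ X, l x := by
  set X₁ := Y.image φ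
  set B : α → Finset α := fun x => {y ∈ Y | φ y = x}
  have hX₁ : X₁ ⊆ X := image_subset_iff.mpr hφ
  have hφX₁ : ∀ y ∈ Y, φ y ∈ X₁ := fun y hy => mem_image_of_mem φ hy
  have hB : ∀ x ∈ X₁, 1 ≤ (B x).card := by
    intro x hx
    obtain ⟨y, hy, rfl⟩ := mem_image.mp hx
    exact card_pos.mpr ⟨y, mem_filter.mpr ⟨hy, rfl⟩⟩
  have hYB : Y.card = ∑ x ∈ X₁, (B x).card := card_eq_sum_card_fiberwise hφX₁
  obtain ⟨C, hC, hCdisj⟩ :=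
    exists_pairwiseDisjoint_subset_card_eq X₁ (fun x => (B x).card - 1) (S := X \ X₁) (by
      rw [card_sdiff_of_subset hX₁, sum_tsub_distrib _ hB, ← hYB, sum_const, smul_eq_mul,
        mul_one]
      omega)
  have hC₁ : ∀ x ∈ X₁, ∀ x' ∈ X₁, x' ∉ C x := fun x hx x' hx' h =>
    (mem_sdiff.mp ((hC x hx).1 h)).2 hx'
  have hAX : ∀ x ∈ X₁, insert x (C x) ⊆ X := fun x hx =>
    insert_subset (hX₁ hx) ((hC x hx).1.trans sdiff_subset)
  have hblock : ∀ x ∈ X₁, -t * (B x).card ≤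
      ∑ b ∈ B x, g b + (1 + 1 / p) * ∑ a ∈ insert x (C x), l a := by
    intro x hx
    have hxC : x ∉ C x := hC₁ x hx x hx
    have hAcard : (insert x (C x)).card = (B x).card := by
      rw [card_insert_of_notMem hxC, (hC x hx).2]; have := hB x hx; omega
    refine neg_mul_card_le_of_block hp ht (fun a ha => hl a (hAX x hx ha))
      (by rw [← hAcard, card_insert_of_notMem hxC])
      (fun hBp => hswap _ _
        ⟨hAX x hx, filter_subset _ _, hAcard.ge, hAcard ▸ hBp, fun y hy hyA => ?_⟩)
      (fun a ha b hb => ?_)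
    · rcases mem_insert.mp hyA with h | h
      · exact mem_filter.mpr ⟨hy, h⟩
      · exact absurd h (hC₁ x hx _ (hφX₁ y hy))
    · have hab : IsAdmissibleSwap X Y φ p {a} {b} :=
        ⟨singleton_subset_iff.mpr (hAX x hx (mem_insert_of_mem ha)),
          singleton_subset_iff.mpr (mem_filter.mp hb).1, le_rfl, by simpa using hp,
          fun y hy hya => absurd (mem_singleton.mp hya ▸ ha) (hC₁ x hx _ (hφX₁ y hy))⟩
      simpa using hswap {a} {b} hab
  have hA : (X₁ : Set α).PairwiseDisjoint fun x => insert x (C x) := by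
    intro x hx x' hx' hne
    simp only [Function.onFun, disjoint_insert_left, disjoint_insert_right, mem_insert]
    exact ⟨not_or.mpr ⟨hne.symm, hC₁ x hx x' hx'⟩, hC₁ x' hx' x hx, hCdisj hx hx' hne⟩
  calc -t * Y.card = ∑ x ∈ X₁, -t * (B x).card := by rw [hYB, Nat.cast_sum, mul_sum]
    _ ≤ ∑ x ∈ X₁, (∑ b ∈ B x, g b + (1 + 1 / p) * ∑ a ∈ insert x (C x), l a) :=
      sum_le_sum hblock
    _ = ∑ y ∈ Y, g y + (1 + 1 / p) * ∑ a ∈ X₁.biUnion (fun x => insert x (C x)), l a := by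
      rw [sum_add_distrib, sum_fiberwise_of_maps_to hφX₁, ← mul_sum, sum_biUnion hA]
    _ ≤ ∑ y ∈ Y, g y + (1 + 1 / p) * ∑ x ∈ X, l x := by
      gcongr
      · exact fun x hx _ => hl x hx
      · exact biUnion_subset.mpr hAX

end Swaps

section KMedian

variable {M : Type*} [MetricSpace M]

theorem distToSet_le_dist {v u : M} {X : Finset M} (hu : u ∈ X) : distToSet v X ≤ dist v u :=
  csInf_le ⟨0, by rintro _ ⟨w, -, rfl⟩; exact dist_nonneg⟩ ⟨u, hu, rfl⟩

theorem distToSet_nonneg (v : M) (X : Finset M) : 0 ≤ distToSet v X :=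
  Real.sInf_nonneg (by rintro _ ⟨w, -, rfl⟩; exact dist_nonneg)

theorem exists_mem_dist_eq_distToSet (v : M) {X : Finset M} (hX : X.Nonempty) :
    ∃ u ∈ X, dist v u = distToSet v X := by
  obtain ⟨u, hu, hmin⟩ := X.exists_min_image (dist v) hX
  refine ⟨u, hu, le_antisymm ?_ (distToSet_le_dist hu)⟩
  exact le_csInf ⟨dist v u, u, hu, rfl⟩ (by rintro _ ⟨w, hw, rfl⟩; exact hmin w hw)

variable [DecidableEq M]

theorem distToSet_le_of_swap {X A B X' : Finset M} {π : M → M}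
    (hπ : ∀ u, π u ∈ X ∧ dist u (π u) = distToSet u X) (v o : M) (hX' : X \ A ∪ B ⊆ X')
    (hcov : π o ∈ A → o ∈ B) :
    distToSet v X' ≤ distToSet v X + (if o ∈ B then dist v o - distToSet v X else 0) +
      (if π v ∈ A then 2 * dist v o else 0) := by
  have hmem : ∀ {u}, u ∈ X → u ∉ A → u ∈ X' := fun hu hA =>
    hX' (mem_union_left _ (mem_sdiff.mpr ⟨hu, hA⟩))
  have hvo := dist_nonneg (x := v) (y := o)
  by_cases hoB : o ∈ B
  · have := distToSet_le_dist (v := v) (hX' (mem_union_right _ hoB))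
    split_ifs <;> linarith
  by_cases hvA : π v ∈ A
  · -- serve `v` from the center `π o` of its optimal center `o`, which stays open
    have h₁ := distToSet_le_dist (v := v) (hmem (hπ o).1 (mt hcov hoB))
    have h₂ := dist_triangle v o (π o)
    have h₃ : dist o (π o) ≤ dist o (π v) := (hπ o).2 ▸ distToSet_le_dist (hπ v).1
    have h₄ := dist_triangle o v (π v)
    rw [if_neg hoB, if_pos hvA]
    linarith [(hπ v).2, dist_comm o v]
  · have := distToSet_le_dist (v := v) (hmem (hπ v).1 hvA)
    rw [if_neg hoB, if_neg hvA]
    linarith [(hπ v).2]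

/-- `reassignCost D X o y` is the change in cost when the clients that `o` sends to `y` move from
`X` to `y`; `rerouteCost D π o x` bounds the extra cost of the clients that `π` sends to `x` when
`x` is closed but `π (o v)` is not. -/
noncomputable def reassignCost (D X : Finset M) (o : M → M) (y : M) : ℝ :=
  ∑ v ∈ D with o v = y, (dist v (o v) - distToSet v X)

noncomputable def rerouteCost (D : Finset M) (π o : M → M) (x : M) : ℝ :=
  ∑ v ∈ D with π v = x, 2 * dist v (o v)

variable {D X Y : Finset M} {π o : M → M}

theorem rerouteCost_nonneg (x : M) : 0 ≤ rerouteCost D π o x :=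
  sum_nonneg fun _ _ => mul_nonneg zero_le_two dist_nonneg

theorem sum_reassignCost (hoY : ∀ v ∈ D, o v ∈ Y) :
    ∑ y ∈ Y, reassignCost D X o y = ∑ v ∈ D, dist v (o v) - ∑ v ∈ D, distToSet v X := by
  rw [← sum_sub_distrib]
  exact sum_fiberwise_of_maps_to hoY _

theorem sum_rerouteCost (hπX : ∀ v ∈ D, π v ∈ X) :
    ∑ x ∈ X, rerouteCost D π o x = 2 * ∑ v ∈ D, dist v (o v) := by
  rw [mul_sum]
  exact sum_fiberwise_of_maps_to hπX _

theorem sum_distToSet_le_of_swap {A B X' : Finset M}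
    (hπ : ∀ u, π u ∈ X ∧ dist u (π u) = distToSet u X) (hoY : ∀ v ∈ D, o v ∈ Y)
    (hcov : ∀ y ∈ Y, π y ∈ A → y ∈ B) (hX' : X \ A ∪ B ⊆ X') :
    ∑ v ∈ D, distToSet v X' ≤ ∑ v ∈ D, distToSet v X + ∑ b ∈ B, reassignCost D X o b +
      ∑ a ∈ A, rerouteCost D π o a := by
  simp only [reassignCost, rerouteCost]
  rw [sum_fiberwise_eq_sum_filter, sum_fiberwise_eq_sum_filter, sum_filter, sum_filter,
    ← sum_add_distrib, ← sum_add_distrib]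
  exact sum_le_sum fun v hv =>
    distToSet_le_of_swap hπ v (o v) hX' (hcov (o v) (hoY v hv))

end KMedian

/-- if a size-`k` subset `X ⊆ F` is a `(1 - ε/k)`-approximate local optimum
for the discrete `k`-median objective under swaps of at most `p` points, then
`∑_{v ∈ D} d(v, X) ≤ (1/(1-ε)) · (3 + 2/p) · OPT`. -/
theorem discrete_kmedian_local_search_approx
    {M : Type*} [MetricSpace M] [DecidableEq M] (D F : Finset M) (ε : ℝ) (p k : ℕ)
    (hε0 : 0 < ε) (hε1 : ε < 1) (hp : 1 ≤ p) (hk : 1 ≤ k) (hkF : k ≤ F.card)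
    (X : Finset M) (hXF : X ⊆ F) (hXcard : X.card = k)
    (hlocal : ∀ X' : Finset M, X' ⊆ F → X'.card = k →
        (X \ X').card ≤ p → (X' \ X).card ≤ p →
        (1 - ε / (k : ℝ)) * ∑ v ∈ D, distToSet v X < ∑ v ∈ D, distToSet v X') :
    ∑ v ∈ D, distToSet v X ≤
      (1 / (1 - ε)) * (3 + 2 / (p : ℝ)) *
        (F.powersetCard k).inf' (Finset.powersetCard_nonempty.mpr hkF)
          (fun Y => ∑ v ∈ D, distToSet v Y) := by
  obtain ⟨Y, hY, hYopt⟩ := exists_mem_eq_inf' (powersetCard_nonempty.mpr hkF)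
    fun Y => ∑ v ∈ D, distToSet v Y
  obtain ⟨hYF, hYcard⟩ := mem_powersetCard.mp hY
  rw [hYopt]
  choose π hπ using fun u => exists_mem_dist_eq_distToSet u (X := X) (card_pos.mp (by omega))
  choose o ho using fun u => exists_mem_dist_eq_distToSet u (X := Y) (card_pos.mp (by omega))
  have hswap : ∀ A B, IsAdmissibleSwap X Y π p A B → -(ε / k * ∑ v ∈ D, distToSet v X) ≤
      ∑ b ∈ B, reassignCost D X o b + ∑ a ∈ A, rerouteCost D π o a := by
    rintro A B ⟨hAX, hBY, hBA, hAp, hcov⟩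
    obtain ⟨X', hX'₁, hX'₂, hX'card⟩ := exists_card_eq_of_sdiff_union_subset hAX hBA
    have hlt := hlocal X' (hX'₂.trans (union_subset hXF (hBY.trans hYF))) (hX'card.trans hXcard)
      ((card_le_card (sdiff_le_comm.mp (subset_union_left.trans hX'₁))).trans hAp)
      ((card_le_card (sdiff_le_iff.mpr hX'₂)).trans (hBA.trans hAp))
    have hle := sum_distToSet_le_of_swap (D := D) hπ (fun v _ => (ho v).1) hcov hX'₁
    linarith
  have hcomb := neg_mul_card_le_of_isAdmissibleSwap hp
    (mul_nonneg (by positivity) (sum_nonneg fun v _ => distToSet_nonneg v X)) (by omega)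
    (fun y _ => (hπ y).1) (fun x _ => rerouteCost_nonneg x) hswap
  rw [sum_reassignCost fun v _ => (ho v).1, sum_rerouteCost fun v _ => (hπ v).1] at hcomb
  simp only [(ho _).2, hYcard] at hcomb
  have hεk : ε / k * (∑ v ∈ D, distToSet v X) * k = ε * ∑ v ∈ D, distToSet v X := by
    field_simp
  rw [mul_assoc, one_div_mul_eq_div, le_div_iff₀ (by linarith)]
  linear_combination hcomb + hεk
end

section
/- Let 0 < ε < 1, let p ≥ 1 and 1 ≤ k ≤ |C| be integers, and let X ⊆ C with |X| = k. Suppose that for every subset X' ⊆ C with |X'| = k, |X \ X'| ≤ p and |X' \ X| ≤ p, it holds that cost(X') > (1 − (1 + (1−ε)/(3+2/p)) · ε/k) · cost(X). Then cost(X) ≤ (1/(1−ε))² · (3 + 2/p)² · OPT_C, where OPT_C = min_{Y ⊆ C, |Y| = k} cost(Y). -/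
open scoped Classical

/-- The `k`-means cost of a (nonempty) finite set `X` of centers with respect to the
data set `D`: `cost(X) = ∑_{v ∈ D} min_{u ∈ X} ‖v − u‖²`. -/
noncomputable def kmeansCost {l : ℕ} (D X : Finset (EuclideanSpace ℝ (Fin l))) : ℝ :=
  ∑ v ∈ D, sInf ((fun u => ‖v - u‖ ^ 2) '' (X : Set (EuclideanSpace ℝ (Fin l))))

/-!
Let `O` be an optimal solution and `a`, `ω` nearest-center maps onto `X` and `O`. Each
optimal center `o` is captured by `η o`, the center of `X` nearest to the centroid of the
cluster of `o`. Fibers of `η` of size at most `p` are swapped in one step against their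
capturing center padded with centers capturing nothing; larger fibers are handled by single
swaps and averaged, at the price of a factor `1 + 1/p`. With `δ` the improvement factor of the
hypothesis, `T = cost X` and `S = cost O`, summing the local-optimality inequalities gives
`-δ k T ≤ (S - T) + (1 + 1/p) R`, where `R` is the extra cost of sending each point `v` to
`η (ω v)` instead of `a v`. The parallel-axis identity at the cluster centroids and the triangle
inequality give `R ≤ 2 S + 2 √(S T)`, and the resulting quadratic inequality in `√T` forces
`(1 - ε) √T ≤ (3 + 2/p) √S`.
-/

open Finset
open scoped RealInnerProductSpace

lemma Finset.exists_pairwiseDisjoint_subset_card_eq_s1 {ι α : Type*} [DecidableEq ι]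
    [DecidableEq α] (t : Finset ι) (s : Finset α) (d : ι → ℕ) (h : ∑ i ∈ t, d i ≤ #s) :
    ∃ f : ι → Finset α, (∀ i ∈ t, f i ⊆ s ∧ #(f i) = d i) ∧
      (t : Set ι).PairwiseDisjoint f := by
  induction t using Finset.induction_on generalizing s with
  | empty => exact ⟨fun _ => ∅, by simp, by simp⟩
  | insert i t hi ih =>
    rw [sum_insert hi] at h
    obtain ⟨A, hAs, hA⟩ := exists_subset_card_eq (show d i ≤ #s by omega)
    obtain ⟨f, hf, hdisj⟩ := ih (s \ A) (by rw [card_sdiff_of_subset hAs]; omega)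
    have hne : ∀ j ∈ t, j ≠ i := fun j hj hji => hi (hji ▸ hj)
    refine ⟨Function.update f i A, fun j hj => ?_, ?_⟩
    · rcases mem_insert.1 hj with rfl | hj
      · simp [hAs, hA]
      · rw [Function.update_of_ne (hne j hj)]
        exact ⟨(hf j hj).1.trans sdiff_subset, (hf j hj).2⟩
    · rw [coe_insert]
      refine Set.PairwiseDisjoint.insert_of_notMem ?_ hi fun j hj => ?_
      · exact hdisj.mono_on fun j hj => (Function.update_of_ne (hne j hj) _ _).le
      · rw [Function.update_self, Function.update_of_ne (hne j hj)]
        exact disjoint_of_subset_right (hf j hj).1 disjoint_sdiff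

lemma Finset.exists_swap_of_card_le {α : Type*} [DecidableEq α] {C X A B : Finset α}
    (hXC : X ⊆ C) (hBC : B ⊆ C) (hAX : A ⊆ X) (hBA : #B ≤ #A) :
    ∃ X' ⊆ C, #X' = #X ∧ X \ A ⊆ X' ∧ B ⊆ X' ∧ #(X \ X') ≤ #A ∧ #(X' \ X) ≤ #A := by
  have hAX' := card_le_card hAX
  have hcard : #(X \ A ∪ B) ≤ #X :=
    (card_union_le _ _).trans (by rw [card_sdiff_of_subset hAX]; omega)
  obtain ⟨X', hsub, hX'C, hX'⟩ := exists_subsuperset_card_eq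
    (union_subset (sdiff_subset.trans hXC) hBC) hcard (card_le_card hXC)
  have hXA : X \ A ⊆ X' := subset_union_left.trans hsub
  have hinter : #(X \ A) ≤ #(X ∩ X') :=
    card_le_card fun x hx => mem_inter.2 ⟨(mem_sdiff.1 hx).1, hXA hx⟩
  refine ⟨X', hX'C, hX', hXA, subset_union_right.trans hsub,
    card_le_card fun x hx => ?_, ?_⟩
  · by_contra hxA
    exact (mem_sdiff.1 hx).2 (hXA (mem_sdiff.2 ⟨(mem_sdiff.1 hx).1, hxA⟩))
  · rw [card_sdiff, hX']
    rw [card_sdiff_of_subset hAX] at hinter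
    omega

lemma Finset.sum_le_sum_of_forall_fiber_le {ι κ : Type*} [DecidableEq κ] (D : Finset ι)
    (ω : ι → κ) {f g : ι → ℝ}
    (h : ∀ o, ∑ v ∈ D with ω v = o, f v ≤ ∑ v ∈ D with ω v = o, g v) :
    ∑ v ∈ D, f v ≤ ∑ v ∈ D, g v := by
  have hmaps : ∀ v ∈ D, ω v ∈ D.image ω := fun v hv => mem_image_of_mem ω hv
  rw [← sum_fiberwise_of_maps_to hmaps f, ← sum_fiberwise_of_maps_to hmaps g]
  exact sum_le_sum fun o _ => h o

lemma Finset.exists_nearest_map {E : Type*} [SeminormedAddGroup E] {Y : Finset E}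
    (hY : Y.Nonempty) :
    ∃ a : E → E, (∀ v, a v ∈ Y) ∧ ∀ v, ∀ u ∈ Y, ‖v - a v‖ ≤ ‖v - u‖ := by
  choose a haY ha using fun v => Y.exists_min_image (fun u => ‖v - u‖) hY
  exact ⟨a, haY, ha⟩

lemma neg_mul_card_le_of_forall_neg_le_add {ι κ : Type*} {B : Finset ι} {A : Finset κ}
    (hA : A.Nonempty) {c : ℝ} {g₁ : ι → ℝ} {g₂ : κ → ℝ}
    (h : ∀ o ∈ B, ∀ y ∈ A, -c ≤ g₁ o + g₂ y) :
    -(c * #B) ≤ ∑ o ∈ B, g₁ o + #B / #A * ∑ y ∈ A, g₂ y := by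
  have hApos : (0 : ℝ) < #A := by exact_mod_cast hA.card_pos
  have hrow : ∀ o ∈ B, #A * (-c - g₁ o) ≤ ∑ y ∈ A, g₂ y := fun o ho => by
    have := card_nsmul_le_sum A g₂ (-c - g₁ o) fun y hy => by linarith [h o ho y hy]
    rwa [nsmul_eq_mul] at this
  have hsum := sum_le_sum hrow
  rw [sum_const, nsmul_eq_mul, ← mul_sum, sum_sub_distrib, sum_const, nsmul_eq_mul] at hsum
  rw [div_mul_eq_mul_div, ← sub_le_iff_le_add', le_div_iff₀ hApos]
  linarith

lemma neg_mul_card_le_of_swaps_of_card_eq_succ {ι κ : Type*} [DecidableEq κ] {B : Finset ι}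
    {A : Finset κ} {x : κ} (hcard : #A + 1 = #B) {p : ℕ} (hp : 1 ≤ p) {c : ℝ}
    (hc : 0 ≤ c) {g₁ : ι → ℝ} {g₂ : κ → ℝ} (hg₂ : ∀ y ∈ insert x A, 0 ≤ g₂ y)
    (hbig : #B ≤ p → -c ≤ ∑ o ∈ B, g₁ o + ∑ y ∈ insert x A, g₂ y)
    (hsingle : ∀ o ∈ B, ∀ y ∈ A, -c ≤ g₁ o + g₂ y) :
    -(c * #B) ≤ ∑ o ∈ B, g₁ o + (1 + 1 / p) * ∑ y ∈ insert x A, g₂ y := by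
  have hG : 0 ≤ ∑ y ∈ insert x A, g₂ y := sum_nonneg hg₂
  have hB : (1 : ℝ) ≤ #B := by exact_mod_cast (show 1 ≤ #B by omega)
  by_cases hBp : #B ≤ p
  · have : 0 ≤ 1 / (p : ℝ) * ∑ y ∈ insert x A, g₂ y := by positivity
    nlinarith [hbig hBp]
  · have hpA : (p : ℝ) ≤ #A := by exact_mod_cast (show p ≤ #A by omega)
    have hA : A.Nonempty := card_pos.1 (by omega)
    have hratio : (#B : ℝ) / #A ≤ 1 + 1 / p := by
      rw [← hcard, Nat.cast_succ, add_div, div_self (by positivity)]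
      gcongr
    have hsub : ∑ y ∈ A, g₂ y ≤ ∑ y ∈ insert x A, g₂ y :=
      sum_le_sum_of_subset_of_nonneg (subset_insert x A) fun y hy _ => hg₂ y hy
    have hA0 : 0 ≤ ∑ y ∈ A, g₂ y := sum_nonneg fun y hy => hg₂ y (mem_insert_of_mem hy)
    have := neg_mul_card_le_of_forall_neg_le_add hA hsingle
    nlinarith [mul_le_mul hratio hsub hA0 (by positivity)]

section Swaps

variable {α β : Type*} [DecidableEq α] {X : Finset α} {O : Finset β} {η : β → α}

/-- The points of `f x` capture nothing, so swapping them out never disturbs another fiber. -/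
lemma exists_swap_partners (hη : ∀ o ∈ O, η o ∈ X) (hOX : #O ≤ #X) :
    ∃ f : α → Finset α, (∀ x ∈ O.image η,
        f x ⊆ X \ O.image η ∧ #(f x) + 1 = #{o ∈ O | η o = x}) ∧
      (O.image η : Set α).PairwiseDisjoint fun x => insert x (f x) := by
  set H := O.image η
  have hHX : H ⊆ X := image_subset_iff.2 hη
  have hmaps : ∀ o ∈ O, η o ∈ H := fun o ho => mem_image_of_mem η ho
  have hfiber : ∀ x ∈ H, 1 ≤ #{o ∈ O | η o = x} := fun x hx => by
    obtain ⟨o, ho, rfl⟩ := mem_image.1 hx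
    exact card_pos.2 ⟨o, mem_filter.2 ⟨ho, rfl⟩⟩
  have hsum : ∑ x ∈ H, (#{o ∈ O | η o = x} - 1) + #H = #O := by
    rw [card_eq_sum_card_fiberwise hmaps, card_eq_sum_ones H, ← sum_add_distrib]
    exact sum_congr rfl fun x hx => Nat.sub_add_cancel (hfiber x hx)
  obtain ⟨f, hf, hdisj⟩ := exists_pairwiseDisjoint_subset_card_eq_s1 H (X \ H)
    (fun x => #{o ∈ O | η o = x} - 1)
    (by have := card_le_card hHX; rw [card_sdiff_of_subset hHX]; omega)
  refine ⟨f, fun x hx => ⟨(hf x hx).1, by have := (hf x hx).2; have := hfiber x hx; omega⟩,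
    fun x hx y hy hxy => ?_⟩
  have hfH : ∀ z ∈ H, ∀ w ∈ f z, w ∉ H := fun z hz w hw => (mem_sdiff.1 ((hf z hz).1 hw)).2
  simp only [Function.onFun, disjoint_insert_left, disjoint_insert_right, mem_insert, not_or]
  exact ⟨⟨fun h => hxy h.symm, fun h => hfH x hx y h hy⟩, fun h => hfH y hy x h hx,
    hdisj hx hy hxy⟩

theorem neg_mul_card_le_of_swaps (hη : ∀ o ∈ O, η o ∈ X) (hOX : #O ≤ #X) {p : ℕ} (hp : 1 ≤ p)
    {c : ℝ} (hc : 0 ≤ c) {g₁ : β → ℝ} {g₂ : α → ℝ} (hg₂ : ∀ x ∈ X, 0 ≤ g₂ x)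
    (hswap : ∀ A ⊆ X, ∀ B ⊆ O, #A = #B → #A ≤ p → (∀ o ∈ O, η o ∈ A → o ∈ B) →
      -c ≤ ∑ o ∈ B, g₁ o + ∑ x ∈ A, g₂ x) :
    -(c * #O) ≤ ∑ o ∈ O, g₁ o + (1 + 1 / p) * ∑ x ∈ X, g₂ x := by
  set H := O.image η
  have hmaps : ∀ o ∈ O, η o ∈ H := fun o ho => mem_image_of_mem η ho
  obtain ⟨f, hf, hdisj⟩ := exists_swap_partners hη hOX
  have hfX : ∀ x ∈ H, insert x (f x) ⊆ X := fun x hx =>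
    insert_subset (image_subset_iff.2 hη hx) ((hf x hx).1.trans sdiff_subset)
  have hfH : ∀ x ∈ H, ∀ y ∈ f x, y ∉ H := fun x hx y hy => (mem_sdiff.1 ((hf x hx).1 hy)).2
  have hcard : ∀ x ∈ H, #(insert x (f x)) = #{o ∈ O | η o = x} := fun x hx => by
    rw [card_insert_of_notMem fun h => hfH x hx x h hx, (hf x hx).2]
  have hfiber : ∀ x ∈ H, -(c * #{o ∈ O | η o = x}) ≤
      ∑ o ∈ O with η o = x, g₁ o + (1 + 1 / p) * ∑ y ∈ insert x (f x), g₂ y := fun x hx =>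
    neg_mul_card_le_of_swaps_of_card_eq_succ (hf x hx).2 hp hc (fun y hy => hg₂ y (hfX x hx hy))
      (fun hp' => hswap _ (hfX x hx) _ (filter_subset _ _)
        (hcard x hx) (hcard x hx ▸ hp')
        fun o ho hηo => by
          rcases mem_insert.1 hηo with h | h
          · exact mem_filter.2 ⟨ho, h⟩
          · exact absurd (hmaps o ho) (hfH x hx _ h))
      fun o ho y hy => by
        simpa using hswap {y} (singleton_subset_iff.2 (hfX x hx (mem_insert_of_mem hy))) {o}
          (singleton_subset_iff.2 (mem_filter.1 ho).1) rfl (by simpa using hp)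
          fun o' ho' h => absurd (mem_singleton.1 h ▸ hmaps o' ho') (hfH x hx y hy)
  have hpartners : ∑ x ∈ H, ∑ y ∈ insert x (f x), g₂ y ≤ ∑ x ∈ X, g₂ x := by
    rw [← sum_biUnion hdisj]
    exact sum_le_sum_of_subset_of_nonneg (biUnion_subset.2 hfX) fun x hx _ => hg₂ x hx
  have := sum_le_sum hfiber
  rw [sum_add_distrib, sum_fiberwise_of_maps_to hmaps, ← mul_sum, sum_neg_distrib, ← mul_sum,
    ← Nat.cast_sum, ← card_eq_sum_card_fiberwise hmaps] at this
  linarith [mul_le_mul_of_nonneg_left hpartners (by positivity : (0 : ℝ) ≤ 1 + 1 / p)]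

end Swaps

section Centroid

variable {E : Type*} [NormedAddCommGroup E] [InnerProductSpace ℝ E]

lemma Finset.sum_sub_centroid_eq_zero (N : Finset E) :
    ∑ v ∈ N, (v - N.centroid ℝ id) = 0 := by
  rcases N.eq_empty_or_nonempty with rfl | hN
  · simp
  have hN0 : (#N : ℝ) ≠ 0 := by exact_mod_cast hN.card_pos.ne'
  rw [centroid_def, affineCombination_eq_linear_combination _ _ _
    (sum_centroidWeights_eq_one_of_nonempty ℝ _ hN)]
  simp only [centroidWeights_apply, sum_sub_distrib, sum_const, id]
  rw [← smul_sum, ← Nat.cast_smul_eq_nsmul ℝ, smul_inv_smul₀ hN0, sub_self]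

lemma Finset.sum_norm_sub_sq_eq_sum_norm_sub_centroid_sq_add (N : Finset E) (u : E) :
    ∑ v ∈ N, ‖v - u‖ ^ 2 =
      ∑ v ∈ N, ‖v - N.centroid ℝ id‖ ^ 2 + #N * ‖N.centroid ℝ id - u‖ ^ 2 := by
  set μ := N.centroid ℝ id
  have hsplit : ∀ v, ‖v - u‖ ^ 2 = ‖v - μ‖ ^ 2 + 2 * ⟪v - μ, μ - u⟫ + ‖μ - u‖ ^ 2 :=
    fun v => by rw [← norm_add_sq_real, sub_add_sub_cancel]
  rw [sum_congr rfl fun v _ => hsplit v, sum_add_distrib, sum_add_distrib, ← mul_sum,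
    ← sum_inner, sum_sub_centroid_eq_zero, inner_zero_left, mul_zero, add_zero, sum_const,
    nsmul_eq_mul]

lemma Finset.sum_norm_sub_centroid_sq_le (N : Finset E) (u : E) :
    ∑ v ∈ N, ‖v - N.centroid ℝ id‖ ^ 2 ≤ ∑ v ∈ N, ‖v - u‖ ^ 2 := by
  rw [sum_norm_sub_sq_eq_sum_norm_sub_centroid_sq_add N u]
  have : 0 ≤ (#N : ℝ) * ‖N.centroid ℝ id - u‖ ^ 2 := by positivity
  linarith

lemma Finset.sum_norm_sub_sq_le_of_norm_centroid_sub_le (N : Finset E) {z : E} {w : E → E}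
    (h : ∀ v ∈ N, ‖N.centroid ℝ id - z‖ ≤ ‖N.centroid ℝ id - w v‖) :
    ∑ v ∈ N, ‖v - z‖ ^ 2 ≤
      ∑ v ∈ N, (‖v - N.centroid ℝ id‖ ^ 2 + (‖v - N.centroid ℝ id‖ + ‖v - w v‖) ^ 2) := by
  set μ := N.centroid ℝ id
  have hpt : ∀ v ∈ N, ‖μ - z‖ ^ 2 ≤ (‖v - μ‖ + ‖v - w v‖) ^ 2 := fun v hv => by
    have := (h v hv).trans (norm_sub_le_norm_sub_add_norm_sub μ v (w v))
    rw [norm_sub_rev μ v] at this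
    gcongr
  have := card_nsmul_le_sum N _ _ hpt
  rw [nsmul_eq_mul] at this
  rw [sum_norm_sub_sq_eq_sum_norm_sub_centroid_sq_add N z, sum_add_distrib]
  linarith

lemma sum_norm_sub_sq_reassign_le [DecidableEq E] (D : Finset E) (a ω : E → E)
    (ha : ∀ v w, ‖v - a v‖ ≤ ‖v - a w‖) :
    ∑ v ∈ D, ‖v - a ({w ∈ D | ω w = ω v}.centroid ℝ id)‖ ^ 2 ≤
      ∑ v ∈ D, ‖v - a v‖ ^ 2 + 2 * ∑ v ∈ D, ‖v - ω v‖ ^ 2 +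
        2 * (√(∑ v ∈ D, ‖v - ω v‖ ^ 2) * √(∑ v ∈ D, ‖v - a v‖ ^ 2)) := by
  set μ : E → E := fun v => {w ∈ D | ω w = ω v}.centroid ℝ id
  have hμ : ∀ o (F : E → E → ℝ), ∑ v ∈ D with ω v = o, F v (μ v) =
      ∑ v ∈ D with ω v = o, F v ({w ∈ D | ω w = o}.centroid ℝ id) :=
    fun o F => sum_congr rfl fun v hv => by simp only [μ, (mem_filter.1 hv).2]
  have hreassign : ∑ v ∈ D, ‖v - a (μ v)‖ ^ 2 ≤
      ∑ v ∈ D, (‖v - μ v‖ ^ 2 + (‖v - μ v‖ + ‖v - a v‖) ^ 2) :=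
    D.sum_le_sum_of_forall_fiber_le ω fun o => by
      rw [hμ o fun v m => ‖v - a m‖ ^ 2,
        hμ o fun v m => ‖v - m‖ ^ 2 + (‖v - m‖ + ‖v - a v‖) ^ 2]
      exact sum_norm_sub_sq_le_of_norm_centroid_sub_le _ fun v _ => ha _ v
  have hcentroid : ∑ v ∈ D, ‖v - μ v‖ ^ 2 ≤ ∑ v ∈ D, ‖v - ω v‖ ^ 2 :=
    D.sum_le_sum_of_forall_fiber_le ω fun o => by
      rw [hμ o fun v m => ‖v - m‖ ^ 2]
      exact (sum_norm_sub_centroid_sq_le _ o).trans_eq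
        (sum_congr rfl fun v hv => by rw [(mem_filter.1 hv).2])
  have hcs := Real.sum_mul_le_sqrt_mul_sqrt D (fun v => ‖v - μ v‖) (fun v => ‖v - a v‖)
  have hsqrt := Real.sqrt_le_sqrt hcentroid
  have hexpand : ∑ v ∈ D, (‖v - μ v‖ ^ 2 + (‖v - μ v‖ + ‖v - a v‖) ^ 2) =
      ∑ v ∈ D, ‖v - a v‖ ^ 2 + 2 * ∑ v ∈ D, ‖v - μ v‖ ^ 2 +
        2 * ∑ v ∈ D, ‖v - μ v‖ * ‖v - a v‖ := by
    simp only [mul_sum, ← sum_add_distrib]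
    exact sum_congr rfl fun v _ => by ring
  nlinarith [Real.sqrt_nonneg (∑ v ∈ D, ‖v - a v‖ ^ 2)]

end Centroid

section KMeans

variable {l : ℕ} {D X Y : Finset (EuclideanSpace ℝ (Fin l))}

lemma kmeansCost_empty : kmeansCost D ∅ = 0 := by
  simp [kmeansCost]

lemma kmeansCost_nonneg : 0 ≤ kmeansCost D Y :=
  sum_nonneg fun _ _ => Real.sInf_nonneg (by rintro _ ⟨u, -, rfl⟩; positivity)

lemma kmeansCost_le_sum_norm_sub_sq {f : EuclideanSpace ℝ (Fin l) → EuclideanSpace ℝ (Fin l)}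
    (hf : ∀ v ∈ D, f v ∈ Y) : kmeansCost D Y ≤ ∑ v ∈ D, ‖v - f v‖ ^ 2 :=
  sum_le_sum fun v hv =>
    csInf_le ⟨0, by rintro _ ⟨u, -, rfl⟩; positivity⟩ ⟨f v, hf v hv, rfl⟩

lemma kmeansCost_eq_sum_norm_sub_sq {a : EuclideanSpace ℝ (Fin l) → EuclideanSpace ℝ (Fin l)}
    (haY : ∀ v, a v ∈ Y) (ha : ∀ v, ∀ u ∈ Y, ‖v - a v‖ ≤ ‖v - u‖) :
    kmeansCost D Y = ∑ v ∈ D, ‖v - a v‖ ^ 2 :=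
  sum_congr rfl fun v _ => IsLeast.csInf_eq ⟨⟨a v, haY v, rfl⟩, by
    rintro _ ⟨u, hu, rfl⟩
    exact pow_le_pow_left₀ (norm_nonneg _) (ha v u hu) 2⟩

end KMeans

section LocalSearch

variable {l : ℕ} {D C X O : Finset (EuclideanSpace ℝ (Fin l))}
  {a ω b η : EuclideanSpace ℝ (Fin l) → EuclideanSpace ℝ (Fin l)}

def NoImprovingSwap (D C : Finset (EuclideanSpace ℝ (Fin l))) (p : ℕ) (δ : ℝ)
    (X : Finset (EuclideanSpace ℝ (Fin l))) : Prop :=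
  ∀ X' ⊆ C, #X' = #X → #(X \ X') ≤ p → #(X' \ X) ≤ p →
    (1 - δ) * kmeansCost D X < kmeansCost D X'

/-- After swapping `A ⊆ X` out, a point keeps its center unless that center left, moves to
`ω v` if `ω v` entered, and otherwise to `b v`, which `hbA` guarantees has not left. -/
lemma kmeansCost_le_of_swap {A B X' : Finset (EuclideanSpace ℝ (Fin l))}
    (haX : ∀ v, a v ∈ X) (ha : ∀ v, ∀ u ∈ X, ‖v - a v‖ ≤ ‖v - u‖) (hb : ∀ v, b v ∈ X)
    (hbA : ∀ v, b v ∈ A → ω v ∈ B) (hXA : X \ A ⊆ X') (hBX' : B ⊆ X') :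
    kmeansCost D X' ≤ kmeansCost D X +
      ∑ v ∈ D with ω v ∈ B, (‖v - ω v‖ ^ 2 - ‖v - a v‖ ^ 2) +
        ∑ v ∈ D with a v ∈ A, (‖v - b v‖ ^ 2 - ‖v - a v‖ ^ 2) := by
  set g := fun v => if ω v ∈ B then ω v else if a v ∈ A then b v else a v
  have hg : ∀ v ∈ D, g v ∈ X' := fun v _ => by
    simp only [g]
    split_ifs with hB hA
    exacts [hBX' hB, hXA (mem_sdiff.2 ⟨hb v, fun h => hB (hbA v h)⟩),
      hXA (mem_sdiff.2 ⟨haX v, hA⟩)]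
  rw [kmeansCost_eq_sum_norm_sub_sq haX ha, sum_filter, sum_filter, ← sum_add_distrib,
    ← sum_add_distrib]
  refine (kmeansCost_le_sum_norm_sub_sq hg).trans (sum_le_sum fun v _ => ?_)
  have := pow_le_pow_left₀ (norm_nonneg _) (ha v (b v) (hb v)) 2
  simp only [g]
  split_ifs <;> linarith

lemma neg_mul_kmeansCost_le_of_noImprovingSwap {p : ℕ} {δ : ℝ}
    (hloc : NoImprovingSwap D C p δ X) (hXC : X ⊆ C) (hOC : O ⊆ C) (haX : ∀ v, a v ∈ X)
    (ha : ∀ v, ∀ u ∈ X, ‖v - a v‖ ≤ ‖v - u‖)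
    (hωO : ∀ v, ω v ∈ O) (hη : ∀ o ∈ O, η o ∈ X) {A B : Finset (EuclideanSpace ℝ (Fin l))}
    (hAX : A ⊆ X) (hBO : B ⊆ O) (hAB : #A = #B) (hAp : #A ≤ p)
    (hηA : ∀ o ∈ O, η o ∈ A → o ∈ B) :
    -(δ * kmeansCost D X) ≤
      ∑ o ∈ B, ∑ v ∈ D with ω v = o, (‖v - ω v‖ ^ 2 - ‖v - a v‖ ^ 2) +
        ∑ x ∈ A, ∑ v ∈ D with a v = x, (‖v - η (ω v)‖ ^ 2 - ‖v - a v‖ ^ 2) := by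
  obtain ⟨X', hX'C, hX', hXA, hBX', hout, hin⟩ :=
    exists_swap_of_card_le hXC (hBO.trans hOC) hAX hAB.ge
  have hlt := hloc X' hX'C hX' (hout.trans hAp) (hin.trans hAp)
  have hle := kmeansCost_le_of_swap (D := D) haX ha (fun v => hη _ (hωO v))
    (fun v h => hηA _ (hωO v) h) hXA hBX'
  rw [sum_fiberwise_eq_sum_filter, sum_fiberwise_eq_sum_filter]
  linarith

lemma neg_mul_card_le_of_noImprovingSwap {p : ℕ} (hp : 1 ≤ p) {δ : ℝ} (hδ : 0 ≤ δ)
    (hloc : NoImprovingSwap D C p δ X) (hXC : X ⊆ C) (hOC : O ⊆ C) (hOX : #O ≤ #X)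
    (haX : ∀ v, a v ∈ X) (ha : ∀ v, ∀ u ∈ X, ‖v - a v‖ ≤ ‖v - u‖)
    (hωO : ∀ v, ω v ∈ O) (hω : ∀ v, ∀ u ∈ O, ‖v - ω v‖ ≤ ‖v - u‖) (hη : ∀ o ∈ O, η o ∈ X) :
    -(δ * kmeansCost D X * #O) ≤ kmeansCost D O - kmeansCost D X +
      (1 + 1 / p) * (∑ v ∈ D, ‖v - η (ω v)‖ ^ 2 - kmeansCost D X) := by
  have hreassign :
      ∀ x ∈ X, 0 ≤ ∑ v ∈ D with a v = x, (‖v - η (ω v)‖ ^ 2 - ‖v - a v‖ ^ 2) :=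
    fun x _ => sum_nonneg fun v _ =>
      sub_nonneg.2 (pow_le_pow_left₀ (norm_nonneg _) (ha v _ (hη _ (hωO v))) 2)
  have := neg_mul_card_le_of_swaps hη hOX hp (mul_nonneg hδ kmeansCost_nonneg) hreassign
    fun A hA B hB hAB hAp hηA =>
      neg_mul_kmeansCost_le_of_noImprovingSwap hloc hXC hOC haX ha hωO hη hA hB hAB hAp hηA
  rwa [sum_fiberwise_of_maps_to fun v _ => hωO v, sum_fiberwise_of_maps_to fun v _ => haX v,
    sum_sub_distrib, sum_sub_distrib, ← kmeansCost_eq_sum_norm_sub_sq haX ha,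
    ← kmeansCost_eq_sum_norm_sub_sq hωO hω] at this

end LocalSearch

lemma le_sq_mul_of_le_add_mul_sqrt {ε s T S : ℝ} (hε : ε < 1) (hs : 1 ≤ s) (hT : 0 ≤ T)
    (hS : 0 ≤ S) (h : (1 - (1 + (1 - ε) / s) * ε) * T ≤ s * S + (s - 1) * (√S * √T)) :
    T ≤ (1 / (1 - ε)) ^ 2 * s ^ 2 * S := by
  obtain ⟨u, hu, rfl⟩ : ∃ u, 0 ≤ u ∧ u ^ 2 = T := ⟨√T, Real.sqrt_nonneg T, Real.sq_sqrt hT⟩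
  obtain ⟨r, hr, rfl⟩ : ∃ r, 0 ≤ r ∧ r ^ 2 = S := ⟨√S, Real.sqrt_nonneg S, Real.sq_sqrt hS⟩
  rw [Real.sqrt_sq hu, Real.sqrt_sq hr] at h
  have hε' : 0 < 1 - ε := sub_pos.2 hε
  have hquad : (1 - ε) * (s - ε) * u ^ 2 ≤ s ^ 2 * r ^ 2 + s * (s - 1) * (r * u) := by
    have hβ : s * ((1 - ε) / s) = 1 - ε := mul_div_cancel₀ _ (by positivity)
    linear_combination mul_le_mul_of_nonneg_left h (by positivity : 0 ≤ s) + ε * u ^ 2 * hβ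
  -- the difference of the two sides of `hquad` factors as `((1-ε)u - sr)((s-ε)u + sr)`
  have hkey : (1 - ε) * u ≤ s * r := by
    by_contra! hlt
    have hpos : 0 < (s - ε) * u + s * r := by nlinarith
    nlinarith [mul_pos (sub_pos.2 hlt) hpos]
  calc u ^ 2 ≤ (s * r / (1 - ε)) ^ 2 :=
        pow_le_pow_left₀ hu ((le_div_iff₀ hε').2 (by linarith)) 2
    _ = (1 / (1 - ε)) ^ 2 * s ^ 2 * r ^ 2 := by ring

theorem kmeans_local_search_approx_general
    (l : ℕ) (D C : Finset (EuclideanSpace ℝ (Fin l))) (ε : ℝ) (p k : ℕ)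
    (hε0 : 0 < ε) (hε1 : ε < 1) (hp : 1 ≤ p) (hkC : k ≤ C.card)
    (X : Finset (EuclideanSpace ℝ (Fin l))) (hXC : X ⊆ C) (hXcard : X.card = k)
    (hlocal : ∀ X' : Finset (EuclideanSpace ℝ (Fin l)), X' ⊆ C → X'.card = k →
        (X \ X').card ≤ p → (X' \ X).card ≤ p →
        (1 - (1 + (1 - ε) / (3 + 2 / (p : ℝ))) * (ε / (k : ℝ))) * kmeansCost D X
          < kmeansCost D X') :
    kmeansCost D X ≤
      (1 / (1 - ε)) ^ 2 * (3 + 2 / (p : ℝ)) ^ 2 *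
        (C.powersetCard k).inf' (Finset.powersetCard_nonempty.mpr hkC)
          (fun Y => kmeansCost D Y) := by
  obtain ⟨O, hO, hOopt⟩ := exists_mem_eq_inf' (powersetCard_nonempty.mpr hkC) (kmeansCost D)
  obtain ⟨hOC, hOcard⟩ := mem_powersetCard.1 hO
  rw [hOopt]
  rcases X.eq_empty_or_nonempty with rfl | hX
  · rw [kmeansCost_empty]
    exact mul_nonneg (by positivity) kmeansCost_nonneg
  obtain ⟨a, haX, ha⟩ := exists_nearest_map hX
  obtain ⟨ω, hωO, hω⟩ :=
    exists_nearest_map (card_pos.1 (hOcard.trans hXcard.symm ▸ hX.card_pos))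
  have hloc : NoImprovingSwap D C p _ X := fun X' hX'C hX' =>
    hlocal X' hX'C (hX'.trans hXcard)
  have hswap := neg_mul_card_le_of_noImprovingSwap hp (by positivity) hloc hXC hOC
    (hOcard.trans hXcard.symm).le haX ha hωO hω
    (η := fun o => a ({v ∈ D | ω v = o}.centroid ℝ id)) fun o _ => haX _
  have hreassign := sum_norm_sub_sq_reassign_le D a ω fun v w => ha v _ (haX w)
  rw [← kmeansCost_eq_sum_norm_sub_sq haX ha, ← kmeansCost_eq_sum_norm_sub_sq hωO hω]
    at hreassign
  have hδ : (1 + (1 - ε) / (3 + 2 / (p : ℝ))) * (ε / k) * kmeansCost D X * #O =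
      (1 + (1 - ε) / (3 + 2 / (p : ℝ))) * ε * kmeansCost D X := by
    have hk : (k : ℝ) ≠ 0 := by exact_mod_cast hXcard ▸ hX.card_pos.ne'
    rw [hOcard]
    field_simp
  have hs : (1 : ℝ) ≤ 3 + 2 / p := by linarith [(by positivity : (0 : ℝ) ≤ 2 / p)]
  refine le_sq_mul_of_le_add_mul_sqrt hε1 hs kmeansCost_nonneg kmeansCost_nonneg ?_
  rw [hδ] at hswap
  linear_combination hswap +
    mul_le_mul_of_nonneg_left hreassign (by positivity : (0 : ℝ) ≤ 1 + 1 / p)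

/-- if a size-`k` subset `X ⊆ C` is an approximate local optimum for the
`k`-means objective under swaps of at most `p` points (with improvement factor
`1 − (1 + (1−ε)/(3+2/p))·ε/k`), then
`cost(X) ≤ (1/(1−ε))² · (3 + 2/p)² · OPT_C`. -/
theorem kmeans_local_search_approx
    (l : ℕ) (D C : Finset (EuclideanSpace ℝ (Fin l))) (ε : ℝ) (p k : ℕ)
    (hε0 : 0 < ε) (hε1 : ε < 1) (hp : 1 ≤ p) (hk : 1 ≤ k) (hkC : k ≤ C.card)
    (X : Finset (EuclideanSpace ℝ (Fin l))) (hXC : X ⊆ C) (hXcard : X.card = k)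
    (hlocal : ∀ X' : Finset (EuclideanSpace ℝ (Fin l)), X' ⊆ C → X'.card = k →
        (X \ X').card ≤ p → (X' \ X).card ≤ p →
        (1 - (1 + (1 - ε) / (3 + 2 / (p : ℝ))) * (ε / (k : ℝ))) * kmeansCost D X
          < kmeansCost D X') :
    kmeansCost D X ≤
      (1 / (1 - ε)) ^ 2 * (3 + 2 / (p : ℝ)) ^ 2 *
        (C.powersetCard k).inf' (Finset.powersetCard_nonempty.mpr hkC)
          (fun Y => kmeansCost D Y) :=
  kmeans_local_search_approx_general l D C ε p k hε0 hε1 hp hkC X hXC hXcard hlocal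
end

section
/- Let X ⊆ D be nonempty, let h = max_{v ∈ D} d(v, X), and let v* ∈ D be a point attaining this maximum, i.e., d(v*, X) = h. If every two distinct points u, u' ∈ X satisfy d(u, u') ≥ h, then every two distinct points u, u' ∈ X ∪ {v*} satisfy d(u, u') ≥ max_{v ∈ D} d(v, X ∪ {v*}). In other words, adding a farthest point as a new center preserves the invariant that the minimum pairwise distance between centers is at least the maximum distance from a data point to its closest center. -/
lemma distToSet_le {M : Type*} [MetricSpace M] (v : M) {X : Finset M} {u : M}
    (hu : u ∈ X) : distToSet v X ≤ dist v u := by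
  apply csInf_le
  · exact ⟨0, by rintro r ⟨w, _, rfl⟩; exact dist_nonneg⟩
  · exact ⟨u, hu, rfl⟩

lemma distToSet_mono {M : Type*} [MetricSpace M] (v : M) {X Y : Finset M}
    (hX : X.Nonempty) (hXY : X ⊆ Y) : distToSet v Y ≤ distToSet v X := by
  obtain ⟨u, hu⟩ := hX
  apply le_csInf (Set.Nonempty.image _ ⟨u, hu⟩)
  rintro r ⟨w, hw, rfl⟩
  exact distToSet_le v (hXY hw)

/-- adding a farthest point `v*` as a new center preserves the invariant
that the minimum pairwise distance between centers is at least the maximum distance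
from a data point to its closest center. -/
theorem farthest_point_preserves_invariant
    {M : Type*} [MetricSpace M] [DecidableEq M]
    (D : Finset M) (hD : D.Nonempty)
    (X : Finset M) (hXD : X ⊆ D) (hX : X.Nonempty)
    (h : ℝ) (hh : h = D.sup' hD (fun v => distToSet v X))
    (vstar : M) (hvD : vstar ∈ D) (hvd : distToSet vstar X = h)
    (hsep : ∀ u ∈ X, ∀ u' ∈ X, u ≠ u' → h ≤ dist u u') :
    ∀ u ∈ insert vstar X, ∀ u' ∈ insert vstar X, u ≠ u' →
      D.sup' hD (fun v => distToSet v (insert vstar X)) ≤ dist u u' := by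
  have hsup : D.sup' hD (fun v => distToSet v (insert vstar X)) ≤ h := by
    apply Finset.sup'_le
    intro v hv
    calc distToSet v (insert vstar X) ≤ distToSet v X :=
          distToSet_mono v hX (Finset.subset_insert _ _)
      _ ≤ h := hh ▸ Finset.le_sup' (fun v => distToSet v X) hv
  intro u hu u' hu' hne
  refine le_trans hsup ?_
  rcases Finset.mem_insert.1 hu with h1 | h1 <;> rcases Finset.mem_insert.1 hu' with h2 | h2
  · exact absurd (h1.trans h2.symm) hne
  · rw [h1]; exact hvd.symm.le.trans (distToSet_le vstar h2)
  · rw [h2, dist_comm]; exact hvd.symm.le.trans (distToSet_le vstar h1)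
  · exact hsep u h1 u' h2 hne
end

section
/- Let k ≥ 1 and let X ⊆ D with |X| = k satisfy the invariant that every two distinct points u, u' ∈ X have d(u, u') ≥ max_{v ∈ D} d(v, X). Let σ : D → X be any nearest-center assignment, i.e., d(v, σ(v)) = d(v, X) for all v ∈ D. Then for all v, v' ∈ D with σ(v) = σ(v'), it holds that d(v, v') ≤ 2 · OPT, where OPT = min over all labelings τ : D → {1, …, k} of the maximum of d(w, w') over pairs w ≠ w' with τ(w) = τ(w'). That is, the Voronoi partition induced by X is a 2-approximation for the k-tMM clustering problem. -/
/-- if the `k` centers `X ⊆ D` are pairwise at distance at least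
`max_{v ∈ D} d(v, X)`, then the Voronoi partition induced by any nearest-center
assignment `σ` is a 2-approximation for the `k`-tMM clustering problem: whenever
`σ(v) = σ(v')`, we have `d(v, v') ≤ 2 · OPT`, where `OPT` is the minimum over all
labelings `τ : D → {1, …, k}` of the maximum intracluster distance (here expressed by
quantifying over every labeling `τ` and every nonnegative bound `B` on its
intracluster distances). -/
theorem ktMM_voronoi_two_approx
    {M : Type*} [MetricSpace M]
    (D : Finset M) (hD : D.Nonempty)
    (k : ℕ) (hk : 1 ≤ k)
    (X : Finset M) (hXD : X ⊆ D) (hXcard : X.card = k)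
    (hinv : ∀ u ∈ X, ∀ u' ∈ X, u ≠ u' →
      D.sup' hD (fun v => distToSet v X) ≤ dist u u')
    (σ : M → M) (hσX : ∀ v ∈ D, σ v ∈ X)
    (hσd : ∀ v ∈ D, dist v (σ v) = distToSet v X) :
    ∀ v ∈ D, ∀ v' ∈ D, σ v = σ v' →
      ∀ τ : M → Fin k, ∀ B : ℝ, 0 ≤ B →
        (∀ w ∈ D, ∀ w' ∈ D, w ≠ w' → τ w = τ w' → dist w w' ≤ B) →
        dist v v' ≤ 2 * B := by

  classical
  intro v hv v' hv' hσ τ B hB hτ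
  set R := D.sup' hD (fun v => distToSet v X) with hR
  have hdle : ∀ w : M, ∀ u ∈ X, distToSet w X ≤ dist w u := by
    intro w u hu
    exact csInf_le ((X.finite_toSet.image _).bddBelow) ⟨u, hu, rfl⟩
  have hvv : dist v v' ≤ 2 * R := by
    have h1 : dist v (σ v) ≤ R := by
      rw [hσd v hv, hR]; exact Finset.le_sup' (fun v => distToSet v X) hv
    have h2 : dist v' (σ v') ≤ R := by
      rw [hσd v' hv', hR]; exact Finset.le_sup' (fun v => distToSet v X) hv'
    calc dist v v' ≤ dist v (σ v) + dist (σ v') v' := by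
          rw [hσ]; exact dist_triangle _ _ _
      _ ≤ R + R := add_le_add h1 (by rwa [dist_comm])
      _ = 2 * R := by ring
  have hRB : R ≤ B := by
    by_cases hR0 : R ≤ 0
    · linarith
    push_neg at hR0
    obtain ⟨w, hw, hweq⟩ := Finset.exists_mem_eq_sup' hD (fun v => distToSet v X)
    have hwX : w ∉ X := by
      intro hwX
      have : distToSet w X ≤ dist w w := hdle w w hwX
      simp at this
      rw [hR, hweq] at hR0; linarith
    have hRw : ∀ u ∈ X, R ≤ dist w u := by
      intro u hu; rw [hR, hweq]; exact hdle w u hu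
    have hcard : (Finset.univ : Finset (Fin k)).card < (insert w X).card := by
      rw [Finset.card_insert_of_notMem hwX, hXcard, Finset.card_univ, Fintype.card_fin]
      omega
    obtain ⟨a, ha, b, hb, hab, hτab⟩ :=
      Finset.exists_ne_map_eq_of_card_lt_of_maps_to hcard
        (fun a _ => Finset.mem_univ (τ a))
    have haD : a ∈ D := by
      rcases Finset.mem_insert.mp ha with h | h
      · exact h ▸ hw
      · exact hXD h
    have hbD : b ∈ D := by
      rcases Finset.mem_insert.mp hb with h | h
      · exact h ▸ hw
      · exact hXD h
    have hRab : R ≤ dist a b := by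
      rcases Finset.mem_insert.mp ha with h | hX
      · rcases Finset.mem_insert.mp hb with h' | hX'
        · exact absurd (h.trans h'.symm) hab
        · exact h ▸ hRw b hX'
      · rcases Finset.mem_insert.mp hb with h' | hX'
        · rw [dist_comm]; exact h' ▸ hRw a hX
        · exact hinv a hX b hX' hab
    exact hRab.trans (hτ a haD b hbD hab hτab)
  linarith
end
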